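/- Fix n ∈ ℕ and a measurable partition of unity D on X, let μ ∈ Int M(D_m) with an optimizing limit μ' for (μ,n,D), and set ψ = Σ_{g∈D_m} g·ln(μ(g)/μ'(g)) ∈ L^∞(X,m) and ψ_k = ψ + ψ∘αⁿ + ⋯ + ψ∘α^{n(k−1)}. Then for every k ∈ ℕ and every nonnegative f ∈ L¹(X,m), ∫_X e^{ψ_k}·(f∘α^{nk}) dm ≤ ∫_X f dm. -/

import Mathlib

open MeasureTheory Filter Topology
open scoped Classical ENNReal NNReal

noncomputable section

namespace TEntropyPaper

variable {X : Type*} [MeasurableSpace X]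

/-- The mapping `α` is measurable and the shift operator `A f = f ∘ α` is bounded on
`L¹(X, m)`; equivalently `m (α⁻¹ G) ≤ C · m G` for all measurable `G`. -/
def ShiftBounded (m : Measure X) (α : X → X) : Prop :=
  Measurable α ∧ ∃ C : ℝ≥0, ∀ s : Set X, MeasurableSet s → m (α ⁻¹' s) ≤ (C : ℝ≥0∞) * m s

/-- A positive normalized linear functional on `L^∞(X, m)`, encoded as a real-valued
map on functions `X → ℝ` which is linear and positive on essentially bounded
(strongly) measurable functions, respects `m`-a.e. equality, takes the value `1` at the
constant function `1` and (as a normalization) vanishes on functions not in `L^∞`. -/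
structure PosFunctional (m : Measure X) where
  toFun : (X → ℝ) → ℝ
  map_add' : ∀ f g : X → ℝ, MemLp f ⊤ m → MemLp g ⊤ m → toFun (f + g) = toFun f + toFun g
  map_smul' : ∀ (c : ℝ) (f : X → ℝ), MemLp f ⊤ m → toFun (c • f) = c * toFun f
  nonneg' : ∀ f : X → ℝ, MemLp f ⊤ m → (0 : X → ℝ) ≤ᵐ[m] f → 0 ≤ toFun f
  map_one' : toFun (fun _ => 1) = 1
  congr_ae' : ∀ f g : X → ℝ, MemLp f ⊤ m → MemLp g ⊤ m → f =ᵐ[m] g → toFun f = toFun g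
  zero_of_ne' : ∀ f : X → ℝ, ¬ MemLp f ⊤ m → toFun f = 0

/-- Evaluation of a functional in `M(X,m)` against the `L^∞` test functions. -/
def evalMap (m : Measure X) (μ : PosFunctional m) : {f : X → ℝ // MemLp f ⊤ m} → ℝ :=
  fun f => μ.toFun f.1

/-- The weak-* topology on `M(X,m)`: the topology of pointwise convergence on `L^∞`
test functions. -/
instance (m : Measure X) : TopologicalSpace (PosFunctional m) :=
  TopologicalSpace.induced (evalMap m) inferInstance

/-- `α`-invariance of a functional `μ ∈ M(X,m)`: `μ(f ∘ α) = μ(f)`. -/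
def PosFunctional.Invariant (α : X → X) {m : Measure X} (μ : PosFunctional m) : Prop :=
  ∀ f : X → ℝ, MemLp f ⊤ m → μ.toFun (f ∘ α) = μ.toFun f

/-- A measurable partition of unity on `X`: a finite set of nonnegative functions in
`L^∞(X,m)` summing to `1` almost everywhere. -/
def IsPartUnity (m : Measure X) (D : Finset (X → ℝ)) : Prop :=
  (∀ g ∈ D, MemLp g ⊤ m ∧ (0 : X → ℝ) ≤ᵐ[m] g) ∧ ∀ᵐ x ∂m, ∑ g ∈ D, g x = 1

/-- Birkhoff sum `S_n φ = φ + φ∘α + ⋯ + φ∘α^{n-1}`. -/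
def birkhoff (α : X → X) (φ : X → ℝ) (n : ℕ) (x : X) : ℝ :=
  ∑ i ∈ Finset.range n, φ (α^[i] x)

/-- The unit sphere of `L¹(X,m)`. -/
def UnitL1 (m : Measure X) : Set (X → ℝ) := {f | Integrable f m ∧ ∫ x, |f x| ∂m = 1}

/-- The integral `∫_X g · |f ∘ αⁿ| dm`. -/
def wInt (m : Measure X) (α : X → X) (n : ℕ) (g f : X → ℝ) : ℝ :=
  ∫ x, g x * |f (α^[n] x)| ∂m

/-- The summand `w · ln((∫_X g·|f∘αⁿ| dm)/w)` in the definition of `t`-entropy,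
with values in `EReal`: it is `0` when `w = 0` and `-∞` when the integral vanishes
while `w ≠ 0`. -/
def tauTermR (m : Measure X) (α : X → X) (n : ℕ) (w : ℝ) (f g : X → ℝ) : EReal :=
  if w = 0 then 0
  else if wInt m α n g f = 0 then ⊥
  else ((w * Real.log (wInt m α n g f / w) : ℝ) : EReal)

/-- `τ_n(w, D)` for an abstract weight function `w` on the elements of `D`. -/
def tauNDW (m : Measure X) (α : X → X) (n : ℕ) (D : Finset (X → ℝ))
    (w : (X → ℝ) → ℝ) : EReal :=
  if ∃ g ∈ D, (∫⁻ x, ENNReal.ofReal (g x) ∂m) = 0 ∧ 0 < w g then ⊥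
  else ⨆ f ∈ UnitL1 m, ∑ g ∈ D, tauTermR m α n (w g) f g

/-- `τ_n(μ, D)` for `μ ∈ M(X,m)` and a measurable partition of unity `D`. -/
def tauND (m : Measure X) (α : X → X) (μ : PosFunctional m) (n : ℕ)
    (D : Finset (X → ℝ)) : EReal :=
  tauNDW m α n D (fun g => μ.toFun g)

/-- `τ_n(μ) = inf_D τ_n(μ, D)` over all measurable partitions of unity `D`. -/
def tauN (m : Measure X) (α : X → X) (μ : PosFunctional m) (n : ℕ) : EReal :=
  ⨅ D ∈ {D : Finset (X → ℝ) | IsPartUnity m D}, tauND m α μ n D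

/-- The `t`-entropy `τ(μ) = inf_{n ≥ 1} τ_n(μ)/n`. -/
def tEntropy (m : Measure X) (α : X → X) (μ : PosFunctional m) : EReal :=
  ⨅ n : {k : ℕ // 0 < k}, ((((n : ℕ) : ℝ)⁻¹ : ℝ) : EReal) * tauN m α μ (n : ℕ)

/-- The operator norm `‖A_φⁿ‖` of the `n`-th power of the weighted shift operator
`A_φ f = e^φ · (f ∘ α)` on `L¹(X,m)`, i.e. the supremum of `∫ e^{S_nφ}|f∘αⁿ| dm`
over the unit sphere of `L¹`. -/
def weightedOpNorm (m : Measure X) (α : X → X) (φ : X → ℝ) (n : ℕ) : ℝ :=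
  sSup {r : ℝ | ∃ f ∈ UnitL1 m,
    r = ∫ x, Real.exp (birkhoff α φ n x) * |f (α^[n] x)| ∂m}

/-- `D_m`: the elements of `D` which are not `m`-a.e. zero (i.e. `∫ g dm > 0`). -/
def Dm (m : Measure X) (D : Finset (X → ℝ)) : Finset (X → ℝ) :=
  D.filter (fun g => (∫⁻ x, ENNReal.ofReal (g x) ∂m) ≠ 0)

/-- The simplex `M(D)` of probability measures on the finite set `D`, realized as
weight functions vanishing outside `D`. -/
def MD (D : Finset (X → ℝ)) : Set ((X → ℝ) → ℝ) :=
  {w | (∀ g ∈ D, 0 ≤ w g) ∧ (∑ g ∈ D, w g) = 1 ∧ ∀ g ∉ D, w g = 0}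

/-- The sum `Σ_{g ∈ D_m} w(g)·ln((∫ g·|f∘αⁿ| dm)/w(g))`. -/
def tauSumDm (m : Measure X) (α : X → X) (n : ℕ) (D : Finset (X → ℝ))
    (w : (X → ℝ) → ℝ) (f : X → ℝ) : EReal :=
  ∑ g ∈ Dm m D, tauTermR m α n (w g) f g

/-- `τ_n(w, D)` with the sum restricted to `D_m`, for `w ∈ M(D_m)`. -/
def tauDm (m : Measure X) (α : X → X) (n : ℕ) (D : Finset (X → ℝ))
    (w : (X → ℝ) → ℝ) : EReal :=
  ⨆ f ∈ UnitL1 m, tauSumDm m α n D w f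

/-- `w'` is an optimizing limit for `(w, n, D)`: there is a sequence of nonnegative
unit-norm `f_i ∈ L¹(X,m)` along which the supremum defining `τ_n(w,D)` is attained in
the limit and `w'(g) = lim_i ∫ g·(f_i∘αⁿ) dm` for each `g ∈ D_m`. -/
def IsOptLimit (m : Measure X) (α : X → X) (n : ℕ) (D : Finset (X → ℝ))
    (w w' : (X → ℝ) → ℝ) : Prop :=
  ∃ F : ℕ → (X → ℝ),
    (∀ i, F i ∈ UnitL1 m ∧ (0 : X → ℝ) ≤ᵐ[m] F i) ∧
    (∀ g ∈ Dm m D, Tendsto (fun i => wInt m α n g (F i)) atTop (𝓝 (w' g))) ∧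
    Tendsto (fun i => tauSumDm m α n D w (F i)) atTop (𝓝 (tauDm m α n D w))

/-! The vectors `v(g) = ∫ g·(f∘αⁿ) dm`, for `f ≥ 0` with `‖f‖₁ = 1`, form a convex set, and since
`w'` is an optimizing limit the concave function `v ↦ Σ w(g) ln v(g)` attains at `w'` its supremum
over this set. Its one-sided derivative at `w'` towards any such `v` is therefore
`Σ w(g) v(g)/w'(g) - 1 ≤ 0`; by homogeneity, `Σ w(g) ∫ g·(f∘αⁿ) dm / w'(g) ≤ ∫ f dm` for every
`f ≥ 0`. Jensen's inequality for `exp`, with the weights `g(x)`, gives `e^ψ ≤ Σ g·w(g)/w'(g)`, so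
`h ↦ e^ψ·(h∘αⁿ)` does not increase the integral of nonnegative functions; `e^{ψ_k}·(f∘α^{nk})` is
its `k`-th iterate applied to `f`. -/

open Real

theorem sum_mul_div_le_one_of_sum_mul_log_le {ι : Type*} {s : Finset ι} {w v b : ι → ℝ}
    (hw : ∑ i ∈ s, w i = 1) (hv : ∀ i ∈ s, v i ≠ 0)
    (h : ∀ t ∈ Set.Ioo (0 : ℝ) 1,
      ∑ i ∈ s, w i * log ((1 - t) * v i + t * b i) ≤ ∑ i ∈ s, w i * log (v i)) :
    ∑ i ∈ s, w i * b i / v i ≤ 1 := by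
  set φ : ℝ → ℝ := fun t => ∑ i ∈ s, w i * log ((1 - t) * v i + t * b i)
  have hφ : HasDerivAt φ (∑ i ∈ s, w i * ((b i - v i) / v i)) 0 := by
    refine HasDerivAt.fun_sum fun i hi => HasDerivAt.const_mul _ ?_
    have hlin : HasDerivAt (fun t : ℝ => (1 - t) * v i + t * b i) (b i - v i) 0 := by
      have := (((hasDerivAt_id (0 : ℝ)).const_sub 1).mul_const (v i)).add
        ((hasDerivAt_id (0 : ℝ)).mul_const (b i))
      exact this.congr_deriv (by ring)
    simpa using hlin.log (by simpa using hv i hi)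
  have hslope : ∀ᶠ t in 𝓝[>] (0 : ℝ), t⁻¹ • (φ (0 + t) - φ 0) ≤ 0 := by
    filter_upwards [Ioo_mem_nhdsGT one_pos] with t ht
    refine smul_nonpos_of_nonneg_of_nonpos (inv_nonneg.2 ht.1.le) (sub_nonpos.2 ?_)
    simpa [φ] using h t ht
  have hderiv : ∑ i ∈ s, w i * ((b i - v i) / v i) ≤ 0 :=
    le_of_tendsto hφ.tendsto_slope_zero_right hslope
  calc ∑ i ∈ s, w i * b i / v i = ∑ i ∈ s, w i * ((b i - v i) / v i) + ∑ i ∈ s, w i := by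
        rw [← Finset.sum_add_distrib]
        refine Finset.sum_congr rfl fun i hi => ?_
        field_simp [hv i hi]
        ring
    _ ≤ 1 := by linarith

def weightedComp {Y : Type*} (ψ : Y → ℝ) (β : Y → Y) (h : Y → ℝ) : Y → ℝ :=
  fun x => exp (ψ x) * h (β x)

lemma weightedComp_iterate_apply {Y : Type*} (ψ : Y → ℝ) (β : Y → Y) (h : Y → ℝ) (k : ℕ)
    (x : Y) :
    (weightedComp ψ β)^[k] h x = exp (birkhoff β ψ k x) * h (β^[k] x) := by
  induction k generalizing h with
  | zero => simp [birkhoff]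
  | succ k ih =>
    rw [Function.iterate_succ_apply, ih, weightedComp, birkhoff, birkhoff,
      Finset.sum_range_succ, exp_add, Function.iterate_succ_apply']
    ring

lemma integral_iterate_le {m : Measure X} {T : (X → ℝ) → X → ℝ} {S : Set (X → ℝ)}
    (hTS : Set.MapsTo T S S) (hT : ∀ h ∈ S, ∫ x, T h x ∂m ≤ ∫ x, h x ∂m)
    {f : X → ℝ} (hf : f ∈ S) (k : ℕ) :
    ∫ x, T^[k] f x ∂m ≤ ∫ x, f x ∂m := by
  induction k with
  | zero => rfl
  | succ k ih =>
    rw [Function.iterate_succ_apply']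
    exact (hT _ (hTS.iterate k hf)).trans ih

section ShiftBounded

variable {m : Measure X} {α β : X → X}

lemma ShiftBounded.comp (hα : ShiftBounded m α) (hβ : ShiftBounded m β) :
    ShiftBounded m (α ∘ β) := by
  obtain ⟨hαm, Cα, hCα⟩ := hα
  obtain ⟨hβm, Cβ, hCβ⟩ := hβ
  refine ⟨hαm.comp hβm, Cβ * Cα, fun s hs => ?_⟩
  calc m (β ⁻¹' (α ⁻¹' s)) ≤ Cβ * m (α ⁻¹' s) := hCβ _ (hαm hs)
    _ ≤ Cβ * (Cα * m s) := by gcongr; exact hCα s hs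
    _ = ↑(Cβ * Cα) * m s := by push_cast; ring

lemma ShiftBounded.iterate (hα : ShiftBounded m α) : ∀ k, ShiftBounded m α^[k]
  | 0 => ⟨measurable_id, 1, fun s _ => by simp⟩
  | k + 1 => by rw [Function.iterate_succ]; exact (hα.iterate k).comp hα

lemma ShiftBounded.map_le (hα : ShiftBounded m α) : ∃ C : ℝ≥0, m.map α ≤ (C : ℝ≥0∞) • m := by
  obtain ⟨hm, C, hC⟩ := hα
  exact ⟨C, Measure.le_iff.2 fun s hs => by rw [Measure.map_apply hm hs]; simpa using hC s hs⟩

lemma ShiftBounded.quasiMeasurePreserving (hα : ShiftBounded m α) :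
    Measure.QuasiMeasurePreserving α m m :=
  ⟨hα.1, Measure.absolutelyContinuous_of_le_smul hα.map_le.choose_spec⟩

lemma ShiftBounded.integrable_comp {E : Type*} [NormedAddCommGroup E] (hα : ShiftBounded m α)
    {f : X → E} (hf : Integrable f m) : Integrable (fun x => f (α x)) m := by
  obtain ⟨C, hC⟩ := hα.map_le
  exact ((hf.smul_measure ENNReal.coe_ne_top).mono_measure hC).comp_aemeasurable
    hα.1.aemeasurable

end ShiftBounded

section PartUnity

variable {m : Measure X} {D : Finset (X → ℝ)}

lemma Dm_subset : Dm m D ⊆ D := Finset.filter_subset _ _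

lemma IsPartUnity.memLp_top (hD : IsPartUnity m D) {g : X → ℝ} (hg : g ∈ Dm m D) :
    MemLp g ⊤ m :=
  (hD.1 g (Dm_subset hg)).1

lemma IsPartUnity.ae_nonneg (hD : IsPartUnity m D) : ∀ᵐ x ∂m, ∀ g ∈ Dm m D, 0 ≤ g x :=
  (Dm m D).eventually_all.2 fun g hg => (hD.1 g (Dm_subset hg)).2

lemma IsPartUnity.ae_eq_zero_of_notMem_Dm (hD : IsPartUnity m D) {g : X → ℝ} (hgD : g ∈ D)
    (hg : g ∉ Dm m D) : g =ᵐ[m] 0 := by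
  have hzero : ∫⁻ x, ENNReal.ofReal (g x) ∂m = 0 := by
    by_contra h; exact hg (Finset.mem_filter.2 ⟨hgD, h⟩)
  have hmeas : AEMeasurable (fun x => ENNReal.ofReal (g x)) m :=
    ENNReal.measurable_ofReal.comp_aemeasurable (hD.1 g hgD).1.aestronglyMeasurable.aemeasurable
  filter_upwards [(lintegral_eq_zero_iff' hmeas).1 hzero, (hD.1 g hgD).2] with x hx hx0
  exact le_antisymm (ENNReal.ofReal_eq_zero.1 hx) hx0

lemma IsPartUnity.ae_sum_Dm_eq_one (hD : IsPartUnity m D) : ∀ᵐ x ∂m, ∑ g ∈ Dm m D, g x = 1 := by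
  have hzero : ∀ᵐ x ∂m, ∀ g ∈ D, g ∉ Dm m D → g x = 0 :=
    D.eventually_all.2 fun g hgD => by
      by_cases hg : g ∈ Dm m D
      · exact Eventually.of_forall fun _ h => absurd hg h
      · filter_upwards [hD.ae_eq_zero_of_notMem_Dm hgD hg] with x hx _ using hx
  filter_upwards [hD.2, hzero] with x hx hxz
  rw [← hx]
  exact Finset.sum_subset Dm_subset fun g hgD hg => hxz g hgD hg

end PartUnity

section WInt

variable {m : Measure X} {α : X → X} {n : ℕ} {g f : X → ℝ}

lemma wInt_nonneg (hg : (0 : X → ℝ) ≤ᵐ[m] g) : 0 ≤ wInt m α n g f :=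
  integral_nonneg_of_ae (by filter_upwards [hg] with x hx using mul_nonneg hx (abs_nonneg _))

lemma wInt_const_mul {c : ℝ} (hc : 0 ≤ c) :
    wInt m α n g (fun x => c * f x) = c * wInt m α n g f := by
  simp only [wInt, ← integral_const_mul, abs_mul, abs_of_nonneg hc]
  congr 1; funext x; ring

lemma integrable_mul_abs_comp (hα : ShiftBounded m α) (hg : MemLp g ⊤ m) (hf : Integrable f m) :
    Integrable (fun x => g x * |f (α^[n] x)|) m :=
  ((hα.iterate n).integrable_comp hf).abs.mul_of_top_right hg

lemma wInt_add (hα : ShiftBounded m α) (hg : MemLp g ⊤ m) {f₁ f₂ : X → ℝ}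
    (hf₁ : Integrable f₁ m) (hf₂ : Integrable f₂ m)
    (hf₁0 : (0 : X → ℝ) ≤ᵐ[m] f₁) (hf₂0 : (0 : X → ℝ) ≤ᵐ[m] f₂) :
    wInt m α n g (fun x => f₁ x + f₂ x) = wInt m α n g f₁ + wInt m α n g f₂ := by
  rw [wInt, wInt, wInt, ← integral_add (integrable_mul_abs_comp hα hg hf₁)
    (integrable_mul_abs_comp hα hg hf₂)]
  refine integral_congr_ae ?_
  filter_upwards [(hα.iterate n).quasiMeasurePreserving.ae hf₁0,
    (hα.iterate n).quasiMeasurePreserving.ae hf₂0] with x h₁ h₂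
  simp only [abs_of_nonneg (add_nonneg h₁ h₂), abs_of_nonneg h₁, abs_of_nonneg h₂]
  ring

lemma wInt_eq_zero_of_ae_eq_zero (hα : ShiftBounded m α) (hf : f =ᵐ[m] 0) :
    wInt m α n g f = 0 := by
  rw [wInt, ← integral_zero X ℝ]
  refine integral_congr_ae ?_
  filter_upwards [(hα.iterate n).quasiMeasurePreserving.ae hf] with x hx
  simp [hx]

end WInt

lemma mem_unitL1_iff_integral_eq_one {m : Measure X} {f : X → ℝ} (hf : Integrable f m)
    (hf0 : (0 : X → ℝ) ≤ᵐ[m] f) : f ∈ UnitL1 m ↔ ∫ x, f x ∂m = 1 := by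
  rw [UnitL1, Set.mem_ofPred_eq, integral_congr_ae (hf0.mono fun x hx => abs_of_nonneg hx)]
  exact and_iff_right hf

lemma tauSumDm_eq_coe {m : Measure X} {α : X → X} {n : ℕ} {D : Finset (X → ℝ)}
    {w : (X → ℝ) → ℝ} {f : X → ℝ} (hw : ∀ g ∈ Dm m D, w g ≠ 0)
    (hf : ∀ g ∈ Dm m D, wInt m α n g f ≠ 0) :
    tauSumDm m α n D w f = ((∑ g ∈ Dm m D, w g * log (wInt m α n g f / w g) : ℝ) : EReal) := by
  refine (Finset.sum_congr rfl fun g hg => ?_).trans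
    (map_sum (⟨⟨Real.toEReal, EReal.coe_zero⟩, EReal.coe_add⟩ : ℝ →+ EReal) _ _).symm
  rw [tauTermR, if_neg (hw g hg), if_neg (hf g hg)]
  rfl

def psi (m : Measure X) (D : Finset (X → ℝ)) (w w' : (X → ℝ) → ℝ) (x : X) : ℝ :=
  ∑ g ∈ Dm m D, g x * log (w g / w' g)

lemma aestronglyMeasurable_psi {m : Measure X} {D : Finset (X → ℝ)} (hD : IsPartUnity m D)
    (w w' : (X → ℝ) → ℝ) : AEStronglyMeasurable (psi m D w w') m :=
  Finset.aestronglyMeasurable_fun_sum _ fun _ hg =>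
    (hD.memLp_top hg).aestronglyMeasurable.mul_const _

section OptLimit

variable {m : Measure X} {α : X → X} {n : ℕ} {D : Finset (X → ℝ)} {w w' : (X → ℝ) → ℝ}

lemma eventually_wInt_pos {F : ℕ → X → ℝ}
    (hF : ∀ g ∈ Dm m D, Tendsto (fun i => wInt m α n g (F i)) atTop (𝓝 (w' g)))
    (hw'pos : ∀ g ∈ Dm m D, 0 < w' g) :
    ∀ᶠ i in atTop, ∀ g ∈ Dm m D, 0 < wInt m α n g (F i) :=
  (Dm m D).eventually_all.2 fun g hg => (hF g hg).eventually (eventually_gt_nhds (hw'pos g hg))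

lemma IsOptLimit.tauDm_eq (hopt : IsOptLimit m α n D w w') (hwpos : ∀ g ∈ Dm m D, 0 < w g)
    (hw'pos : ∀ g ∈ Dm m D, 0 < w' g) :
    tauDm m α n D w = ((∑ g ∈ Dm m D, w g * log (w' g / w g) : ℝ) : EReal) := by
  obtain ⟨F, -, hFw', hFtau⟩ := hopt
  have hlim : Tendsto (fun i => ((∑ g ∈ Dm m D, w g * log (wInt m α n g (F i) / w g) : ℝ) : EReal))
      atTop (𝓝 ((∑ g ∈ Dm m D, w g * log (w' g / w g) : ℝ) : EReal)) :=
    EReal.tendsto_coe.2 <| tendsto_finsetSum _ fun g hg =>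
      (((hFw' g hg).div_const _).log (div_pos (hw'pos g hg) (hwpos g hg)).ne').const_mul _
  refine tendsto_nhds_unique hFtau (hlim.congr' ?_)
  filter_upwards [eventually_wInt_pos hFw' hw'pos] with i hi
  exact (tauSumDm_eq_coe (fun g hg => (hwpos g hg).ne') fun g hg => (hi g hg).ne').symm

lemma convexComb_mem_unitL1 {F f : X → ℝ} (hF : F ∈ UnitL1 m) (hF0 : (0 : X → ℝ) ≤ᵐ[m] F)
    (hf : f ∈ UnitL1 m) (hf0 : (0 : X → ℝ) ≤ᵐ[m] f) {t : ℝ} (ht : t ∈ Set.Icc (0 : ℝ) 1) :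
    (fun x => (1 - t) * F x + t * f x) ∈ UnitL1 m := by
  have hint : Integrable (fun x => (1 - t) * F x + t * f x) m :=
    (hF.1.const_mul (1 - t)).add (hf.1.const_mul t)
  have hnonneg : (0 : X → ℝ) ≤ᵐ[m] fun x => (1 - t) * F x + t * f x := by
    filter_upwards [hF0, hf0] with x hFx hfx
    exact add_nonneg (mul_nonneg (sub_nonneg.2 ht.2) hFx) (mul_nonneg ht.1 hfx)
  rw [mem_unitL1_iff_integral_eq_one hint hnonneg, integral_add (hF.1.const_mul _)
    (hf.1.const_mul _), integral_const_mul, integral_const_mul,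
    (mem_unitL1_iff_integral_eq_one hF.1 hF0).1 hF, (mem_unitL1_iff_integral_eq_one hf.1 hf0).1 hf]
  ring

lemma IsOptLimit.sum_mul_log_le (hopt : IsOptLimit m α n D w w') (hα : ShiftBounded m α)
    (hD : IsPartUnity m D) (hwpos : ∀ g ∈ Dm m D, 0 < w g) (hw'pos : ∀ g ∈ Dm m D, 0 < w' g)
    {f : X → ℝ} (hf : f ∈ UnitL1 m) (hf0 : (0 : X → ℝ) ≤ᵐ[m] f) {t : ℝ}
    (ht : t ∈ Set.Ioo (0 : ℝ) 1) :
    ∑ g ∈ Dm m D, w g * log (((1 - t) * w' g + t * wInt m α n g f) / w g)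
      ≤ ∑ g ∈ Dm m D, w g * log (w' g / w g) := by
  have hτ := hopt.tauDm_eq hwpos hw'pos
  obtain ⟨F, hF, hFw', -⟩ := hopt
  have hb0 : ∀ g ∈ Dm m D, 0 ≤ wInt m α n g f := fun g hg =>
    wInt_nonneg (hD.1 g (Dm_subset hg)).2
  -- `(1 - t) F i + t f` competes in the supremum defining `τ_n(w, D)`
  have hstep : ∀ᶠ i in atTop,
      ∑ g ∈ Dm m D, w g * log (((1 - t) * wInt m α n g (F i) + t * wInt m α n g f) / w g)
        ≤ ∑ g ∈ Dm m D, w g * log (w' g / w g) := by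
    filter_upwards [eventually_wInt_pos hFw' hw'pos] with i hi
    have hwInt : ∀ g ∈ Dm m D, wInt m α n g (fun x => (1 - t) * F i x + t * f x)
        = (1 - t) * wInt m α n g (F i) + t * wInt m α n g f := fun g hg => by
      rw [wInt_add hα (hD.memLp_top hg) ((hF i).1.1.const_mul _) (hf.1.const_mul _)
        ((hF i).2.mono fun x hx => mul_nonneg (sub_nonneg.2 ht.2.le) hx)
        (hf0.mono fun x hx => mul_nonneg ht.1.le hx),
        wInt_const_mul (sub_nonneg.2 ht.2.le), wInt_const_mul ht.1.le]
    have hpos : ∀ g ∈ Dm m D, wInt m α n g (fun x => (1 - t) * F i x + t * f x) ≠ 0 :=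
      fun g hg => by
        rw [hwInt g hg]
        exact (add_pos_of_pos_of_nonneg (mul_pos (sub_pos.2 ht.2) (hi g hg))
          (mul_nonneg ht.1.le (hb0 g hg))).ne'
    rw [← EReal.coe_le_coe_iff, ← hτ]
    calc _ = tauSumDm m α n D w (fun x => (1 - t) * F i x + t * f x) := by
          rw [tauSumDm_eq_coe (fun g hg => (hwpos g hg).ne') hpos]
          exact congrArg _ (Finset.sum_congr rfl fun g hg => by rw [hwInt g hg])
      _ ≤ tauDm m α n D w := le_iSup₂ (f := fun f _ => tauSumDm m α n D w f) _
          (convexComb_mem_unitL1 (hF i).1 (hF i).2 hf hf0 (Set.Ioo_subset_Icc_self ht))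
  refine le_of_tendsto (tendsto_finsetSum _ fun g hg => ?_) hstep
  have hlim_pos : 0 < (1 - t) * w' g + t * wInt m α n g f :=
    add_pos_of_pos_of_nonneg (mul_pos (sub_pos.2 ht.2) (hw'pos g hg))
      (mul_nonneg ht.1.le (hb0 g hg))
  exact (((((hFw' g hg).const_mul _).add_const _).div_const _).log
    (div_pos hlim_pos (hwpos g hg)).ne').const_mul _

lemma IsOptLimit.sum_mul_wInt_div_le_one (hopt : IsOptLimit m α n D w w') (hα : ShiftBounded m α)
    (hD : IsPartUnity m D) (hw : ∑ g ∈ Dm m D, w g = 1) (hwpos : ∀ g ∈ Dm m D, 0 < w g)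
    (hw'pos : ∀ g ∈ Dm m D, 0 < w' g) {f : X → ℝ} (hf : f ∈ UnitL1 m)
    (hf0 : (0 : X → ℝ) ≤ᵐ[m] f) :
    ∑ g ∈ Dm m D, w g * wInt m α n g f / w' g ≤ 1 := by
  have hlog : ∀ t ∈ Set.Ioo (0 : ℝ) 1,
      ∑ g ∈ Dm m D, w g * log ((1 - t) * (w' g / w g) + t * (wInt m α n g f / w g))
        ≤ ∑ g ∈ Dm m D, w g * log (w' g / w g) := fun t ht => by
    refine le_of_eq_of_le (Finset.sum_congr rfl fun g _ => ?_)
      (hopt.sum_mul_log_le hα hD hwpos hw'pos hf hf0 ht)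
    congr 2
    ring
  calc ∑ g ∈ Dm m D, w g * wInt m α n g f / w' g
      = ∑ g ∈ Dm m D, w g * (wInt m α n g f / w g) / (w' g / w g) :=
        Finset.sum_congr rfl fun g hg => by field_simp [(hwpos g hg).ne']
    _ ≤ 1 := sum_mul_div_le_one_of_sum_mul_log_le hw
        (fun g hg => (div_pos (hw'pos g hg) (hwpos g hg)).ne') hlog

lemma IsOptLimit.sum_mul_wInt_div_le_integral (hopt : IsOptLimit m α n D w w')
    (hα : ShiftBounded m α) (hD : IsPartUnity m D) (hw : ∑ g ∈ Dm m D, w g = 1)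
    (hwpos : ∀ g ∈ Dm m D, 0 < w g) (hw'pos : ∀ g ∈ Dm m D, 0 < w' g) {f : X → ℝ}
    (hf : Integrable f m) (hf0 : (0 : X → ℝ) ≤ᵐ[m] f) :
    ∑ g ∈ Dm m D, w g * wInt m α n g f / w' g ≤ ∫ x, f x ∂m := by
  rcases (integral_nonneg_of_ae hf0).eq_or_lt with hc | hc
  · have hf_zero : f =ᵐ[m] 0 := (integral_eq_zero_iff_of_nonneg_ae hf0 hf).1 hc.symm
    simp [wInt_eq_zero_of_ae_eq_zero hα hf_zero, ← hc]
  set c := ∫ x, f x ∂m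
  have hscaled0 : (0 : X → ℝ) ≤ᵐ[m] fun x => c⁻¹ * f x :=
    hf0.mono fun x hx => mul_nonneg (inv_nonneg.2 hc.le) hx
  have hunit : (fun x => c⁻¹ * f x) ∈ UnitL1 m := by
    rw [mem_unitL1_iff_integral_eq_one (hf.const_mul _) hscaled0, integral_const_mul,
      inv_mul_cancel₀ hc.ne']
  have h := hopt.sum_mul_wInt_div_le_one hα hD hw hwpos hw'pos hunit hscaled0
  have hscale : ∑ g ∈ Dm m D, w g * wInt m α n g (fun x => c⁻¹ * f x) / w' g
      = c⁻¹ * ∑ g ∈ Dm m D, w g * wInt m α n g f / w' g := by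
    rw [Finset.mul_sum]
    refine Finset.sum_congr rfl fun g _ => ?_
    rw [wInt_const_mul (inv_nonneg.2 hc.le)]
    ring
  rwa [hscale, inv_mul_le_iff₀ hc, mul_one] at h

end OptLimit

section Potential

variable {m : Measure X} {α : X → X} {n : ℕ} {D : Finset (X → ℝ)} {w w' : (X → ℝ) → ℝ}

lemma exp_psi_le (hD : IsPartUnity m D) (hwpos : ∀ g ∈ Dm m D, 0 < w g)
    (hw'pos : ∀ g ∈ Dm m D, 0 < w' g) :
    ∀ᵐ x ∂m, exp (psi m D w w' x) ≤ ∑ g ∈ Dm m D, g x * (w g / w' g) := by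
  filter_upwards [hD.ae_nonneg, hD.ae_sum_Dm_eq_one] with x h0 h1
  calc exp (psi m D w w' x) = exp (∑ g ∈ Dm m D, g x • log (w g / w' g)) := rfl
    _ ≤ ∑ g ∈ Dm m D, g x • exp (log (w g / w' g)) :=
        convexOn_exp.map_sum_le h0 h1 fun _ _ => Set.mem_univ _
    _ = ∑ g ∈ Dm m D, g x * (w g / w' g) := Finset.sum_congr rfl fun g hg => by
        rw [smul_eq_mul, exp_log (div_pos (hwpos g hg) (hw'pos g hg))]

lemma weightedComp_nonneg {ψ : X → ℝ} {β : X → X} (hβ : ShiftBounded m β) {h : X → ℝ}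
    (hh0 : (0 : X → ℝ) ≤ᵐ[m] h) : (0 : X → ℝ) ≤ᵐ[m] weightedComp ψ β h :=
  hβ.quasiMeasurePreserving.ae hh0 |>.mono fun _ hx => mul_nonneg (exp_pos _).le hx

lemma weightedComp_psi_le (hα : ShiftBounded m α) (hD : IsPartUnity m D)
    (hwpos : ∀ g ∈ Dm m D, 0 < w g) (hw'pos : ∀ g ∈ Dm m D, 0 < w' g) {h : X → ℝ}
    (hh0 : (0 : X → ℝ) ≤ᵐ[m] h) :
    weightedComp (psi m D w w') (α^[n]) h
      ≤ᵐ[m] fun x => ∑ g ∈ Dm m D, w g / w' g * (g x * |h (α^[n] x)|) := by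
  filter_upwards [exp_psi_le hD hwpos hw'pos, (hα.iterate n).quasiMeasurePreserving.ae hh0]
    with x hψ hx
  calc weightedComp (psi m D w w') (α^[n]) h x = exp (psi m D w w' x) * |h (α^[n] x)| := by
        rw [weightedComp, abs_of_nonneg hx]
    _ ≤ (∑ g ∈ Dm m D, g x * (w g / w' g)) * |h (α^[n] x)| :=
        mul_le_mul_of_nonneg_right hψ (abs_nonneg _)
    _ = ∑ g ∈ Dm m D, w g / w' g * (g x * |h (α^[n] x)|) := by
        rw [Finset.sum_mul]
        exact Finset.sum_congr rfl fun _ _ => by ring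

lemma integrable_sum_mul_abs_comp (hα : ShiftBounded m α) (hD : IsPartUnity m D)
    (c : (X → ℝ) → ℝ) {h : X → ℝ} (hh : Integrable h m) :
    Integrable (fun x => ∑ g ∈ Dm m D, c g * (g x * |h (α^[n] x)|)) m :=
  integrable_finsetSum _ fun _ hg =>
    (integrable_mul_abs_comp hα (hD.memLp_top hg) hh).const_mul _

lemma integrable_weightedComp_psi (hα : ShiftBounded m α) (hD : IsPartUnity m D)
    (hwpos : ∀ g ∈ Dm m D, 0 < w g) (hw'pos : ∀ g ∈ Dm m D, 0 < w' g) {h : X → ℝ}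
    (hh : Integrable h m) (hh0 : (0 : X → ℝ) ≤ᵐ[m] h) :
    Integrable (weightedComp (psi m D w w') (α^[n]) h) m := by
  have hmeas : AEStronglyMeasurable (weightedComp (psi m D w w') (α^[n]) h) m :=
    (continuous_exp.comp_aestronglyMeasurable (aestronglyMeasurable_psi hD w w')).mul
      (hh.1.comp_quasiMeasurePreserving (hα.iterate n).quasiMeasurePreserving)
  refine (integrable_sum_mul_abs_comp (n := n) hα hD (fun g => w g / w' g) hh).mono' hmeas ?_
  filter_upwards [weightedComp_nonneg (hα.iterate n) hh0,
    weightedComp_psi_le hα hD hwpos hw'pos hh0] with x h0 hle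
  rwa [norm_of_nonneg h0]

lemma IsOptLimit.integral_weightedComp_psi_le (hopt : IsOptLimit m α n D w w')
    (hα : ShiftBounded m α) (hD : IsPartUnity m D) (hw : ∑ g ∈ Dm m D, w g = 1)
    (hwpos : ∀ g ∈ Dm m D, 0 < w g) (hw'pos : ∀ g ∈ Dm m D, 0 < w' g) {h : X → ℝ}
    (hh : Integrable h m) (hh0 : (0 : X → ℝ) ≤ᵐ[m] h) :
    ∫ x, weightedComp (psi m D w w') (α^[n]) h x ∂m ≤ ∫ x, h x ∂m :=
  calc ∫ x, weightedComp (psi m D w w') (α^[n]) h x ∂m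
      ≤ ∫ x, ∑ g ∈ Dm m D, w g / w' g * (g x * |h (α^[n] x)|) ∂m :=
        integral_mono_of_nonneg (weightedComp_nonneg (hα.iterate n) hh0)
          (integrable_sum_mul_abs_comp hα hD _ hh) (weightedComp_psi_le hα hD hwpos hw'pos hh0)
    _ = ∑ g ∈ Dm m D, w g * wInt m α n g h / w' g := by
        rw [integral_finsetSum _ fun g hg =>
          (integrable_mul_abs_comp hα (hD.memLp_top hg) hh).const_mul _]
        refine Finset.sum_congr rfl fun g _ => ?_
        rw [integral_const_mul, wInt]
        ring
    _ ≤ ∫ x, h x ∂m := hopt.sum_mul_wInt_div_le_integral hα hD hw hwpos hw'pos hh hh0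

end Potential

theorem exp_psi_k_integral_le_general
    (m : Measure X) (α : X → X) (hα : ShiftBounded m α)
    (n : ℕ) (D : Finset (X → ℝ)) (hD : IsPartUnity m D)
    (w w' : (X → ℝ) → ℝ) (hw : w ∈ MD (Dm m D)) (hwpos : ∀ g ∈ Dm m D, 0 < w g)
    (hopt : IsOptLimit m α n D w w') (hw'pos : ∀ g ∈ Dm m D, 0 < w' g)
    (ψ : X → ℝ) (hψ : ψ = fun y => ∑ g ∈ Dm m D, g y * Real.log (w g / w' g))
    (k : ℕ) (f : X → ℝ) (hf : Integrable f m) (hf0 : (0 : X → ℝ) ≤ᵐ[m] f) :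
    ∫ x, Real.exp (∑ j ∈ Finset.range k, ψ (α^[n * j] x)) * f (α^[n * k] x) ∂m
      ≤ ∫ x, f x ∂m := by
  obtain rfl : ψ = psi m D w w' := hψ
  let S : Set (X → ℝ) := {h | Integrable h m ∧ (0 : X → ℝ) ≤ᵐ[m] h}
  have hS : Set.MapsTo (weightedComp (psi m D w w') (α^[n])) S S := fun h hh =>
    ⟨integrable_weightedComp_psi hα hD hwpos hw'pos hh.1 hh.2,
      weightedComp_nonneg (hα.iterate n) hh.2⟩
  calc ∫ x, exp (∑ j ∈ Finset.range k, psi m D w w' (α^[n * j] x)) * f (α^[n * k] x) ∂m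
      = ∫ x, (weightedComp (psi m D w w') (α^[n]))^[k] f x ∂m := by
        simp only [weightedComp_iterate_apply, birkhoff, Function.iterate_mul]
    _ ≤ ∫ x, f x ∂m := integral_iterate_le hS
        (fun h hh => hopt.integral_weightedComp_psi_le hα hD hw.2.1 hwpos hw'pos hh.1 hh.2)
        ⟨hf, hf0⟩ k

/-- Let `μ ∈ Int M(D_m)` with optimizing limit `μ'`, and set
`ψ = Σ_{g∈D_m} g·ln(μ(g)/μ'(g))` and `ψ_k = ψ + ψ∘αⁿ + ⋯ + ψ∘α^{n(k−1)}`.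
Then for every `k` and every nonnegative `f ∈ L¹(X,m)`,
`∫ e^{ψ_k}·(f∘α^{nk}) dm ≤ ∫ f dm`. -/
theorem exp_psi_k_integral_le
    (m : Measure X) [SigmaFinite m] (α : X → X) (hα : ShiftBounded m α)
    (n : ℕ) (hn : 0 < n) (D : Finset (X → ℝ)) (hD : IsPartUnity m D)
    (w w' : (X → ℝ) → ℝ) (hw : w ∈ MD (Dm m D)) (hwpos : ∀ g ∈ Dm m D, 0 < w g)
    (hopt : IsOptLimit m α n D w w') (hw'pos : ∀ g ∈ Dm m D, 0 < w' g)
    (ψ : X → ℝ) (hψ : ψ = fun y => ∑ g ∈ Dm m D, g y * Real.log (w g / w' g))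
    (k : ℕ) (f : X → ℝ) (hf : Integrable f m) (hf0 : (0 : X → ℝ) ≤ᵐ[m] f) :
    ∫ x, Real.exp (∑ j ∈ Finset.range k, ψ (α^[n * j] x)) * f (α^[n * k] x) ∂m
      ≤ ∫ x, f x ∂m :=
  exp_psi_k_integral_le_general m α hα n D hD w w' hw hwpos hopt hw'pos ψ hψ k f hf hf0

end TEntropyPaper
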